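/- (Levin's characterization of plain complexity via prefix-free complexity.) There exists a constant c such that for every binary string a and every natural number i: if |K(a|i) − i| ≤ c₀ for some fixed constant c₀, then |C(a) − i| ≤ c (where c depends on c₀ but not on a or i). Moreover, C(a) coincides, up to an additive O(1) term, with the minimal i such that K(a|i) ≤ i. -/

import Mathlib

/-- Binary strings. -/
abbrev BinStr := List Bool

/-- Standard encoding of a binary string as a natural number. -/
def enc (a : BinStr) : ℕ := Encodable.encode a

/-- A (conditional) machine: it takes a program (a binary string) and a condition
(a natural number, which encodes the conditioning data: a number, a string via `enc`,
or a tuple combined with the standard pairing `Nat.pair`) and possibly outputs a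
natural number (encoding the result in the same way). -/
abbrev Machine := BinStr → ℕ →. ℕ

/-- Conditional Kolmogorov complexity of `x` given condition `y`, with respect to the
machine `U`: the minimal length of a program `p` such that `U p y = x`. -/
noncomputable def cplx (U : Machine) (x y : ℕ) : ℕ :=
  sInf {n | ∃ p : BinStr, p.length = n ∧ x ∈ U p y}

/-- Unconditional Kolmogorov complexity: conditional complexity with the trivial
condition `0`. -/
noncomputable def cplx0 (U : Machine) (x : ℕ) : ℕ := cplx U x 0

/-- `U` is an optimal universal machine for plain complexity: it is partial computable
and simulates every partial computable machine with at most a constant overhead in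
program length. -/
def IsOptimal (U : Machine) : Prop :=
  Partrec₂ U ∧
    ∀ V : Machine, Partrec₂ V →
      ∃ c : ℕ, ∀ (p : BinStr) (y x : ℕ), x ∈ V p y →
        ∃ q : BinStr, q.length ≤ p.length + c ∧ x ∈ U q y

/-- A machine is prefix-free if, for every condition, the set of its halting programs
is prefix-free: no halting program is a proper prefix of another halting program. -/
def PrefixFreeMachine (M : Machine) : Prop :=
  ∀ (y : ℕ) (p q : BinStr), p <+: q → (M p y).Dom → (M q y).Dom → p = q

/-- `U` is an optimal universal prefix-free machine: it is partial computable,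
prefix-free, and simulates every partial computable prefix-free machine with at most
a constant overhead in program length. -/
def IsPrefixOptimal (U : Machine) : Prop :=
  Partrec₂ U ∧ PrefixFreeMachine U ∧
    ∀ V : Machine, Partrec₂ V → PrefixFreeMachine V →
      ∃ c : ℕ, ∀ (p : BinStr) (y x : ℕ), x ∈ V p y →
        ∃ q : BinStr, q.length ≤ p.length + c ∧ x ∈ U q y

/-! If `K(a|i) ≤ i + k`, padding a shortest such program to length exactly `i + k + 1` gives a
plain program for `a` from which `i` can be read off the length, so `C(a) ≤ i + O(1)`.
Conversely, a shortest plain program for `a`, padded and preceded by the self-delimiting header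
`1^L 0`, can be given the length `L + 1 + (i - L²)` whenever `i > C(a) + L²`. Given `i`, the header
fixes this length, so such programs form a prefix-free set and `K(a|i) ≤ i - L² + L + O(1)`,
with the `O(1)` independent of `L`; for large `L` this is below `i - k`. Hence `K(a|i) = i + O(1)`
confines `i` to an `O(1)`-window around `C(a)`, and so does `K(a|i) ≤ i` for the least such `i`. -/

lemma Partrec.ite_none {α σ : Type*} [Primcodable α] [Primcodable σ] {c : α → Prop}
    [DecidablePred c] (hc : PrimrecPred c) {f : α →. σ} (hf : Partrec f) :
    Partrec fun a => if c a then f a else Part.none :=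
  ((Computable.ofOption
      (Primrec.ite hc (Primrec.const (some ())) (Primrec.const Option.none)).to_comp).bind
    (hf.comp Computable.fst).to₂).of_eq fun a => by by_cases h : c a <;> simp [h]

def pad (m : ℕ) (p : BinStr) : BinStr := List.replicate m false ++ true :: p

def unpad (q : BinStr) : BinStr := (q.dropWhile (fun b => !b)).tail

@[simp] lemma unpad_pad (m : ℕ) (p : BinStr) : unpad (pad m p) = p := by
  simp [unpad, pad]

@[simp] lemma length_pad (m : ℕ) (p : BinStr) : (pad m p).length = m + 1 + p.length := by
  simp [pad]; omega

lemma primrec_unpad : Primrec unpad :=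
  Primrec.list_tail.comp (Primrec.list_dropWhile (Primrec.dom_bool Bool.not))

def leadingTrues (q : BinStr) : ℕ := q.findIdx (fun b => !b)

lemma primrec_leadingTrues : Primrec leadingTrues :=
  Primrec.list_findIdx Primrec.id ((Primrec.dom_bool Bool.not).comp Primrec.snd).to₂

@[simp] lemma leadingTrues_replicate_append (L : ℕ) (r : BinStr) :
    leadingTrues (List.replicate L true ++ false :: r) = L := by
  induction L with
  | zero => simp [leadingTrues, List.findIdx_cons]
  | succ L ih => simpa [leadingTrues, List.replicate_succ, List.findIdx_cons] using ih

lemma leadingTrues_append {q : BinStr} (h : leadingTrues q < q.length) (t : BinStr) :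
    leadingTrues (q ++ t) = leadingTrues q := by
  unfold leadingTrues at h ⊢
  rw [List.findIdx_append, if_pos h]

def padMachine (V : Machine) (k : ℕ) : Machine :=
  fun q _ => V (unpad q) (q.length - (k + 1))

lemma partrec_padMachine {V : Machine} (hV : Partrec₂ V) (k : ℕ) : Partrec₂ (padMachine V k) :=
  hV.comp (primrec_unpad.comp Primrec.fst).to_comp
    (Primrec.nat_sub.comp (Primrec.list_length.comp Primrec.fst) (Primrec.const (k + 1))).to_comp

lemma padMachine_pad (V : Machine) {k i : ℕ} {p : BinStr} (h : p.length ≤ i + k) (y : ℕ) :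
    padMachine V k (pad (i + k - p.length) p) y = V p i := by
  simp only [padMachine, unpad_pad, length_pad]
  congr 1
  omega

def prefixMachine (U : Machine) : Machine := fun q i =>
  if q.length = leadingTrues q + 1 + (i - leadingTrues q * leadingTrues q) then
    U (unpad (q.drop (leadingTrues q + 1))) 0
  else Part.none

lemma partrec_prefixMachine {U : Machine} (hU : Partrec₂ U) : Partrec₂ (prefixMachine U) := by
  have hL : Primrec fun x : BinStr × ℕ => leadingTrues x.1 :=
    primrec_leadingTrues.comp Primrec.fst
  refine Partrec.ite_none ?_ (hU.comp ?_ (Computable.const 0))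
  · exact Primrec.eq.comp (Primrec.list_length.comp Primrec.fst)
      (Primrec.nat_add.comp (Primrec.succ.comp hL)
        (Primrec.nat_sub.comp Primrec.snd (Primrec.nat_mul.comp hL hL)))
  · exact (primrec_unpad.comp (Primrec.list_drop.comp (Primrec.succ.comp hL) Primrec.fst)).to_comp

lemma length_eq_of_dom_prefixMachine {U : Machine} {q : BinStr} {i : ℕ}
    (h : (prefixMachine U q i).Dom) :
    q.length = leadingTrues q + 1 + (i - leadingTrues q * leadingTrues q) := by
  unfold prefixMachine at h
  split_ifs at h with hlen
  · exact hlen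
  · exact absurd h Part.not_none_dom

lemma prefixFreeMachine_prefixMachine (U : Machine) : PrefixFreeMachine (prefixMachine U) := by
  rintro i q _ ⟨t, rfl⟩ hq hqt
  have hlen := length_eq_of_dom_prefixMachine hq
  have hlen' := length_eq_of_dom_prefixMachine hqt
  rw [leadingTrues_append (by omega), List.length_append] at hlen'
  simpa using (by omega : t.length = 0)

lemma prefixMachine_apply (U : Machine) {L i : ℕ} {p : BinStr} (h : p.length < i - L * L) :
    prefixMachine U (List.replicate L true ++ false :: pad (i - L * L - 1 - p.length) p) i
      = U p 0 := by
  have hlen : (List.replicate L true ++ false :: pad (i - L * L - 1 - p.length) p).length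
      = L + 1 + (i - L * L) := by
    simp only [List.length_append, List.length_replicate, List.length_cons, length_pad]
    omega
  have hdrop : (List.replicate L true ++ false :: pad (i - L * L - 1 - p.length) p).drop (L + 1)
      = pad (i - L * L - 1 - p.length) p := by
    simp [List.drop_append]
  rw [prefixMachine, leadingTrues_replicate_append, if_pos hlen, hdrop, unpad_pad]

section Complexity

variable {U V : Machine}

lemma cplx_le_length {x y : ℕ} {p : BinStr} (h : x ∈ U p y) : cplx U x y ≤ p.length :=
  Nat.sInf_le ⟨p, rfl, h⟩

lemma exists_length_eq_cplx {x y : ℕ} (h : ∃ p, x ∈ U p y) :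
    ∃ p, x ∈ U p y ∧ p.length = cplx U x y := by
  obtain ⟨p, hp⟩ := h
  obtain ⟨q, hq, hmem⟩ :=
    Nat.sInf_mem (s := {n | ∃ p : BinStr, p.length = n ∧ x ∈ U p y}) ⟨_, p, rfl, hp⟩
  exact ⟨q, hmem, hq⟩

def constMachine (x : ℕ) : Machine := fun p _ => if p = [] then Part.some x else Part.none

lemma partrec_constMachine (x : ℕ) : Partrec₂ (constMachine x) :=
  Partrec.ite_none (Primrec.eq.comp Primrec.fst (Primrec.const [])) (Computable.const x).partrec

lemma prefixFreeMachine_constMachine (x : ℕ) : PrefixFreeMachine (constMachine x) := by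
  intro y p q _ hp hq
  simp only [constMachine] at hp hq
  split_ifs at hp hq with hp' hq'
  · rw [hp', hq']
  all_goals exact absurd ‹_› Part.not_none_dom

lemma IsOptimal.exists_mem (hU : IsOptimal U) (x y : ℕ) : ∃ q, x ∈ U q y := by
  obtain ⟨c, hc⟩ := hU.2 _ (partrec_constMachine x)
  obtain ⟨q, -, hq⟩ := hc [] y x (by simp [constMachine])
  exact ⟨q, hq⟩

lemma IsPrefixOptimal.exists_mem (hV : IsPrefixOptimal V) (x y : ℕ) : ∃ q, x ∈ V q y := by
  obtain ⟨c, hc⟩ := hV.2.2 _ (partrec_constMachine x) (prefixFreeMachine_constMachine x)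
  obtain ⟨q, -, hq⟩ := hc [] y x (by simp [constMachine])
  exact ⟨q, hq⟩

lemma IsOptimal.cplx0_le_of_mem (hU : IsOptimal U) (hV : Partrec₂ V) (k : ℕ) :
    ∃ c, ∀ (p : BinStr) (x i : ℕ), x ∈ V p i → p.length ≤ i + k → cplx0 U x ≤ i + c := by
  obtain ⟨c, hc⟩ := hU.2 _ (partrec_padMachine hV k)
  refine ⟨k + 1 + c, fun p x i hp hlen => ?_⟩
  obtain ⟨q, hq, hmem⟩ := hc (pad (i + k - p.length) p) 0 x (by rwa [padMachine_pad V hlen])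
  have hC := cplx_le_length hmem
  rw [length_pad] at hq
  unfold cplx0
  omega

lemma IsPrefixOptimal.cplx_add_lt_of_mem (hV : IsPrefixOptimal V) (hU : Partrec₂ U) (k : ℕ) :
    ∃ d, ∀ (p : BinStr) (x i : ℕ), x ∈ U p 0 → p.length + d ≤ i → cplx V x i + k < i := by
  obtain ⟨c, hc⟩ := hV.2.2 _ (partrec_prefixMachine hU) (prefixFreeMachine_prefixMachine U)
  obtain ⟨L, hsaving⟩ : ∃ L, L + 1 + c + k < L * L := ⟨c + k + 2, by nlinarith⟩
  refine ⟨L * L + 1, fun p x i hp hi => ?_⟩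
  obtain ⟨q, hq, hmem⟩ := hc _ i x
    (by rwa [prefixMachine_apply U (by omega : p.length < i - L * L)])
  have hK := cplx_le_length hmem
  simp only [List.length_append, List.length_replicate, List.length_cons, length_pad] at hq
  omega

lemma cplx0_le_of_cplx_le (hU : IsOptimal U) (hV : IsPrefixOptimal V) (k : ℕ) :
    ∃ c, ∀ x i, cplx V x i ≤ i + k → cplx0 U x ≤ i + c := by
  obtain ⟨c, hc⟩ := hU.cplx0_le_of_mem hV.1 k
  refine ⟨c, fun x i h => ?_⟩
  obtain ⟨p, hp, hlen⟩ := exists_length_eq_cplx (hV.exists_mem x i)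
  exact hc p x i hp (hlen ▸ h)

lemma cplx_add_lt_of_cplx0_add_le (hU : IsOptimal U) (hV : IsPrefixOptimal V) (k : ℕ) :
    ∃ d, ∀ x i, cplx0 U x + d ≤ i → cplx V x i + k < i := by
  obtain ⟨d, hd⟩ := hV.cplx_add_lt_of_mem hU.1 k
  refine ⟨d, fun x i h => ?_⟩
  obtain ⟨p, hp, hlen⟩ := exists_length_eq_cplx (hU.exists_mem x 0)
  exact hd p x i hp (by rw [hlen]; exact h)

end Complexity

/-- **Levin's characterization of plain complexity.**
If `|K(a|i) − i| ≤ c₀` then `|C(a) − i| ≤ c` for a constant `c` depending only on `c₀`;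
moreover `C(a)` coincides up to `O(1)` with the minimal `i` such that `K(a|i) ≤ i`. -/
theorem levin_characterization (U V : Machine) (hU : IsOptimal U) (hV : IsPrefixOptimal V) :
    (∀ c₀ : ℕ, ∃ c : ℕ, ∀ (a : BinStr) (i : ℕ),
        |(cplx V (enc a) i : ℤ) - (i : ℤ)| ≤ (c₀ : ℤ) →
        |(cplx0 U (enc a) : ℤ) - (i : ℤ)| ≤ (c : ℤ)) ∧
    (∃ c : ℕ, ∀ a : BinStr,
        |(cplx0 U (enc a) : ℤ) - ((sInf {i : ℕ | cplx V (enc a) i ≤ i} : ℕ) : ℤ)| ≤ (c : ℤ)) := by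
  refine ⟨fun c₀ => ?_, ?_⟩
  · obtain ⟨c, hc⟩ := cplx0_le_of_cplx_le hU hV c₀
    obtain ⟨d, hd⟩ := cplx_add_lt_of_cplx0_add_le hU hV c₀
    refine ⟨c + d, fun a i h => ?_⟩
    rw [abs_sub_le_iff] at h ⊢
    have hC := hc (enc a) i (by omega)
    have hK := mt (hd (enc a) i) (by omega)
    omega
  · obtain ⟨c, hc⟩ := cplx0_le_of_cplx_le hU hV 0
    obtain ⟨d, hd⟩ := cplx_add_lt_of_cplx0_add_le hU hV 0
    refine ⟨c + d, fun a => ?_⟩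
    have hmem : cplx0 U (enc a) + d ∈ {i | cplx V (enc a) i ≤ i} :=
      (hd (enc a) _ le_rfl).le
    have hle := Nat.sInf_le hmem
    have hC := hc (enc a) _ (Nat.sInf_mem ⟨_, hmem⟩)
    rw [abs_sub_le_iff]
    omega
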